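/- Fix N ∈ ℕ and a nonempty set I ⊂ {1,…,N}² with I ≠ {1,…,N}², and let f = 𝟙_I/√|I| ∈ ℂ^{N×N}. Then for every (k1,k2) ∈ {−⌊N/2⌋+1,…,⌈N/2⌉}²: |(Af)_{k1,k2}| ≤ √|I|/N, and if (k1,k2) ≠ (0,0), additionally |(Af)_{k1,k2}| ≤ Per(I)/( |(k1,k2)|·√|I| ), where |(k1,k2)| = √(k1² + k2²). In particular |(Af)_{k1,k2}| ≤ min{ Per(I)/(|(k1,k2)|·√|I|), √|I|/N } for (k1,k2) ≠ (0,0). -/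

import Mathlib

/- STATEMENT 17: incoherence estimates for the normalized indicator of a set
`I ⊊ {1,…,N}²` with respect to the two-dimensional DFT. -/

/-- Two-dimensional unitary DFT of `x ∈ ℂ^{N×N}` (entries `x j1 j2`, `1 ≤ j1,j2 ≤ N`). -/
noncomputable def dft2 (N : ℕ) (x : ℕ → ℕ → ℂ) (k1 k2 : ℤ) : ℂ :=
  (N : ℂ)⁻¹ * ∑ j1 ∈ Finset.Icc 1 N, ∑ j2 ∈ Finset.Icc 1 N, x j1 j2 *
    Complex.exp (2 * Real.pi * Complex.I * ((j1 : ℂ) * (k1 : ℂ) + (j2 : ℂ) * (k2 : ℂ)) / (N : ℂ))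

/-- Horizontal finite differences with zero boundary at `t1 = N`. -/
def fdH (N : ℕ) (x : ℕ → ℕ → ℂ) (t1 t2 : ℕ) : ℂ :=
  if t1 < N then x (t1 + 1) t2 - x t1 t2 else 0

/-- Vertical finite differences with zero boundary at `t2 = N`. -/
def fdV (N : ℕ) (x : ℕ → ℕ → ℂ) (t1 t2 : ℕ) : ℂ :=
  if t2 < N then x t1 (t2 + 1) - x t1 t2 else 0

/-- Entrywise `ℓ¹` norm over the grid `{1,…,N}²`. -/
noncomputable def l1grid (N : ℕ) (v : ℕ → ℕ → ℂ) : ℝ :=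
  ∑ t1 ∈ Finset.Icc 1 N, ∑ t2 ∈ Finset.Icc 1 N, ‖v t1 t2‖

/-- Indicator function of `I ⊂ {1,…,N}²`. -/
def indic (I : Finset (ℕ × ℕ)) (t1 t2 : ℕ) : ℂ := if (t1, t2) ∈ I then 1 else 0

/-- `Per(I) = ‖𝟙_I‖_{TV,1}`, the anisotropic total variation of the indicator. -/
noncomputable def Per (N : ℕ) (I : Finset (ℕ × ℕ)) : ℝ :=
  l1grid N (fdH N (indic I)) + l1grid N (fdV N (indic I))

/-! Write the coefficient as `S / (N √|I|)` with `S = ∑_{(j1,j2) ∈ I} ω1 ^ j1 ω2 ^ j2`,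
`ωi = e(ki / N)`. The first bound is `|S| ≤ |I|`. For the second, summation by parts in `j1`
gives `|1 - ω1| |S| ≤ 2 ‖D1 𝟙_I‖₁`, and `|1 - ω1| = 2 |sin (π k1 / N)| ≥ 2 |k1| / N` as long as
`|k1| ≤ 2N/3`, which holds on the centred frequency range once `N ≥ 2` (forced by `∅ ≠ I ⊊ grid`).
The same in `j2`, together with `|(k1, k2)| ≤ |k1| + |k2|`, gives `|(k1, k2)| |S| ≤ N Per(I)`. -/

open Finset Real

lemma le_sin_pi_mul {t : ℝ} (h0 : 0 ≤ t) (h1 : t ≤ 2 / 3) : t ≤ sin (π * t) := by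
  rcases le_total t (1 / 2) with ht | ht
  · have := le_sin_mul (x := 2 * t) (by linarith) (by linarith)
    rw [show π / 2 * (2 * t) = π * t by ring] at this
    linarith
  · have := le_sin_mul (x := 2 * (1 - t)) (by linarith) (by linarith)
    rw [show π / 2 * (2 * (1 - t)) = π - π * t by ring, sin_pi_sub] at this
    linarith

lemma abs_le_abs_sin_pi_mul {t : ℝ} (ht : |t| ≤ 2 / 3) : |t| ≤ |sin (π * t)| := by
  rcases abs_cases t with ⟨h, h0⟩ | ⟨h, h0⟩ <;> rw [h] at ht ⊢
  · exact (le_sin_pi_mul h0 ht).trans (le_abs_self _)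
  · have := le_sin_pi_mul (by linarith) ht
    rw [mul_neg, sin_neg] at this
    exact this.trans (neg_le_abs _)

noncomputable def fourierRoot (N : ℕ) (k : ℤ) : ℂ :=
  Complex.exp (2 * π * Complex.I * k / N)

lemma fourierRoot_eq_exp_I_mul (N : ℕ) (k : ℤ) :
    fourierRoot N k = Complex.exp (Complex.I * ((2 * π * k / N : ℝ) : ℂ)) := by
  rw [fourierRoot]; push_cast; ring_nf

lemma norm_fourierRoot (N : ℕ) (k : ℤ) : ‖fourierRoot N k‖ = 1 := by
  rw [fourierRoot_eq_exp_I_mul, Complex.norm_exp_I_mul_ofReal]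

lemma fourierRoot_pow_self (N : ℕ) (k : ℤ) : fourierRoot N k ^ N = 1 := by
  rcases eq_or_ne N 0 with rfl | hN
  · exact pow_zero _
  rw [fourierRoot, ← Complex.exp_nat_mul,
    show (N : ℂ) * (2 * π * Complex.I * k / N) = k * (2 * π * Complex.I) by field_simp,
    Complex.exp_int_mul_two_pi_mul_I]

lemma two_mul_abs_div_le_norm_one_sub_fourierRoot {N : ℕ} {k : ℤ} (hk : 3 * |k| ≤ 2 * N) :
    2 * |(k : ℝ)| / N ≤ ‖1 - fourierRoot N k‖ := by
  have hkN : |(k / N : ℝ)| ≤ 2 / 3 := by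
    have hkR : 3 * |(k : ℝ)| ≤ 2 * N := by exact_mod_cast hk
    rw [abs_div, Nat.abs_cast]
    exact div_le_of_le_mul₀ (Nat.cast_nonneg N) (by norm_num) (by linarith)
  rw [norm_sub_rev, fourierRoot_eq_exp_I_mul, Complex.norm_exp_I_mul_ofReal_sub_one,
    show 2 * π * k / N / 2 = π * (k / N : ℝ) by ring, norm_mul, Real.norm_eq_abs,
    Real.norm_eq_abs, abs_two, mul_div_assoc]
  have := abs_le_abs_sin_pi_mul hkN
  rw [abs_div, Nat.abs_cast] at this
  linarith

lemma one_sub_mul_sum_Icc_mul_pow {R : Type*} [CommRing R] (y : ℕ → R) (ω : R) {N : ℕ}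
    (hN : 1 ≤ N) :
    (1 - ω) * ∑ j ∈ Icc 1 N, y j * ω ^ j =
      ω * y 1 - ω ^ (N + 1) * y N + ∑ t ∈ Ico 1 N, (y (t + 1) - y t) * ω ^ (t + 1) := by
  induction N, hN using Nat.le_induction with
  | base => simp only [Icc_self, sum_singleton, Ico_self, sum_empty]; ring
  | succ n hn ih =>
    rw [sum_Icc_succ_top (by omega), sum_Ico_succ_top hn, mul_add, ih]
    ring

lemma norm_one_sub_mul_norm_sum_le {𝕜 : Type*} [NormedField 𝕜] (y : ℕ → 𝕜) {ω : 𝕜} {N : ℕ}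
    (hω : ω ^ N = 1) (hω1 : ‖ω‖ = 1) :
    ‖1 - ω‖ * ‖∑ j ∈ Icc 1 N, y j * ω ^ j‖ ≤ 2 * ∑ t ∈ Ico 1 N, ‖y (t + 1) - y t‖ := by
  rcases Nat.eq_zero_or_pos N with rfl | hN
  · simp
  have hboundary : ‖y 1 - y N‖ ≤ ∑ t ∈ Ico 1 N, ‖y (t + 1) - y t‖ := by
    simpa only [← dist_eq_norm, dist_comm (y (_ + 1))] using dist_le_Ico_sum_dist y hN
  -- after summation by parts, `ω ^ (N + 1) = ω` turns the two boundary terms into `ω (y 1 - y N)`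
  rw [← norm_mul, one_sub_mul_sum_Icc_mul_pow y ω hN, pow_succ, hω, one_mul, ← mul_sub]
  calc ‖ω * (y 1 - y N) + ∑ t ∈ Ico 1 N, (y (t + 1) - y t) * ω ^ (t + 1)‖
      ≤ ‖y 1 - y N‖ + ∑ t ∈ Ico 1 N, ‖y (t + 1) - y t‖ := by
        refine (norm_add_le _ _).trans (add_le_add (by rw [norm_mul, hω1, one_mul]) ?_)
        refine (norm_sum_le _ _).trans_eq (sum_congr rfl fun t _ => ?_)
        rw [norm_mul, norm_pow, hω1, one_pow, mul_one]
    _ ≤ 2 * ∑ t ∈ Ico 1 N, ‖y (t + 1) - y t‖ := by linarith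

lemma l1grid_fdH (N : ℕ) (u : ℕ → ℕ → ℂ) :
    l1grid N (fdH N u) = ∑ t1 ∈ Ico 1 N, ∑ t2 ∈ Icc 1 N, ‖u (t1 + 1) t2 - u t1 t2‖ := by
  rw [l1grid, ← sum_subset Ico_subset_Icc_self]
  · refine sum_congr rfl fun t1 ht1 => sum_congr rfl fun t2 _ => ?_
    rw [fdH, if_pos (mem_Ico.1 ht1).2]
  · intro t1 ht1 ht1'
    have : ¬ t1 < N := by simp only [mem_Icc, mem_Ico] at ht1 ht1'; omega
    simp [fdH, this]

lemma l1grid_fdV (N : ℕ) (u : ℕ → ℕ → ℂ) :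
    l1grid N (fdV N u) = l1grid N (fdH N fun a b => u b a) :=
  sum_comm

lemma norm_one_sub_mul_norm_sum_le_l1grid_fdH (N : ℕ) (u : ℕ → ℕ → ℂ) {ω τ : ℂ}
    (hω : ω ^ N = 1) (hω1 : ‖ω‖ = 1) (hτ1 : ‖τ‖ = 1) :
    ‖1 - ω‖ * ‖∑ j1 ∈ Icc 1 N, ∑ j2 ∈ Icc 1 N, u j1 j2 * ω ^ j1 * τ ^ j2‖ ≤
      2 * l1grid N (fdH N u) := by
  set y : ℕ → ℂ := fun j1 => ∑ j2 ∈ Icc 1 N, u j1 j2 * τ ^ j2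
  have hrows : ∑ j1 ∈ Icc 1 N, ∑ j2 ∈ Icc 1 N, u j1 j2 * ω ^ j1 * τ ^ j2 =
      ∑ j1 ∈ Icc 1 N, y j1 * ω ^ j1 := by
    refine sum_congr rfl fun j1 _ => ?_
    rw [sum_mul]
    exact sum_congr rfl fun j2 _ => by ring
  have hdiff : ∀ t, ‖y (t + 1) - y t‖ ≤ ∑ t2 ∈ Icc 1 N, ‖u (t + 1) t2 - u t t2‖ := fun t => by
    rw [← sum_sub_distrib]
    refine (norm_sum_le _ _).trans_eq (sum_congr rfl fun t2 _ => ?_)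
    rw [← sub_mul, norm_mul, norm_pow, hτ1, one_pow, mul_one]
  rw [hrows, l1grid_fdH]
  exact (norm_one_sub_mul_norm_sum_le y hω hω1).trans
    (mul_le_mul_of_nonneg_left (sum_le_sum fun t _ => hdiff t) zero_le_two)

lemma norm_one_sub_mul_norm_sum_le_l1grid_fdV (N : ℕ) (u : ℕ → ℕ → ℂ) {ω τ : ℂ}
    (hτ : τ ^ N = 1) (hω1 : ‖ω‖ = 1) (hτ1 : ‖τ‖ = 1) :
    ‖1 - τ‖ * ‖∑ j1 ∈ Icc 1 N, ∑ j2 ∈ Icc 1 N, u j1 j2 * ω ^ j1 * τ ^ j2‖ ≤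
      2 * l1grid N (fdV N u) := by
  rw [l1grid_fdV, sum_comm]
  convert norm_one_sub_mul_norm_sum_le_l1grid_fdH N (fun a b => u b a) hτ hτ1 hω1 using 5
  ring

lemma dft2_eq_sum_fourierRoot_pow (N : ℕ) (x : ℕ → ℕ → ℂ) (k1 k2 : ℤ) :
    dft2 N x k1 k2 = (N : ℂ)⁻¹ * ∑ j1 ∈ Icc 1 N, ∑ j2 ∈ Icc 1 N,
      x j1 j2 * fourierRoot N k1 ^ j1 * fourierRoot N k2 ^ j2 := by
  simp only [dft2, fourierRoot, ← Complex.exp_nat_mul, mul_assoc, ← Complex.exp_add]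
  congr! 5
  ring_nf

lemma dft2_div_const (N : ℕ) (x : ℕ → ℕ → ℂ) (c : ℂ) (k1 k2 : ℤ) :
    dft2 N (fun t1 t2 => x t1 t2 / c) k1 k2 = dft2 N x k1 k2 / c := by
  simp only [dft2, mul_div_assoc, sum_div, div_mul_eq_mul_div]

lemma norm_dft2_le (N : ℕ) (x : ℕ → ℕ → ℂ) (k1 k2 : ℤ) :
    ‖dft2 N x k1 k2‖ ≤ l1grid N x / N := by
  rw [dft2_eq_sum_fourierRoot_pow, norm_mul, norm_inv, Complex.norm_natCast, inv_mul_eq_div]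
  gcongr
  refine (norm_sum_le _ _).trans (sum_le_sum fun j1 _ => (norm_sum_le _ _).trans_eq ?_)
  refine sum_congr rfl fun j2 _ => ?_
  rw [norm_mul, norm_mul, norm_pow, norm_pow, norm_fourierRoot, norm_fourierRoot, one_pow,
    one_pow, mul_one, mul_one]

lemma abs_mul_norm_dft2_le_l1grid_fdH {N : ℕ} (x : ℕ → ℕ → ℂ) {k1 : ℤ} (k2 : ℤ)
    (hk1 : 3 * |k1| ≤ 2 * N) :
    |(k1 : ℝ)| * ‖dft2 N x k1 k2‖ ≤ l1grid N (fdH N x) := by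
  set S := ∑ j1 ∈ Icc 1 N, ∑ j2 ∈ Icc 1 N,
    x j1 j2 * fourierRoot N k1 ^ j1 * fourierRoot N k2 ^ j2
  have hS := norm_one_sub_mul_norm_sum_le_l1grid_fdH N x (fourierRoot_pow_self N k1)
    (norm_fourierRoot N k1) (norm_fourierRoot N k2)
  rw [dft2_eq_sum_fourierRoot_pow, norm_mul, norm_inv, Complex.norm_natCast]
  calc |(k1 : ℝ)| * ((N : ℝ)⁻¹ * ‖S‖) = 2 * |(k1 : ℝ)| / N * ‖S‖ / 2 := by ring
    _ ≤ ‖1 - fourierRoot N k1‖ * ‖S‖ / 2 := by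
        gcongr; exact two_mul_abs_div_le_norm_one_sub_fourierRoot hk1
    _ ≤ l1grid N (fdH N x) := by linarith

lemma abs_mul_norm_dft2_le_l1grid_fdV {N : ℕ} (x : ℕ → ℕ → ℂ) (k1 : ℤ) {k2 : ℤ}
    (hk2 : 3 * |k2| ≤ 2 * N) :
    |(k2 : ℝ)| * ‖dft2 N x k1 k2‖ ≤ l1grid N (fdV N x) := by
  set S := ∑ j1 ∈ Icc 1 N, ∑ j2 ∈ Icc 1 N,
    x j1 j2 * fourierRoot N k1 ^ j1 * fourierRoot N k2 ^ j2
  have hS := norm_one_sub_mul_norm_sum_le_l1grid_fdV N x (fourierRoot_pow_self N k2)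
    (norm_fourierRoot N k1) (norm_fourierRoot N k2)
  rw [dft2_eq_sum_fourierRoot_pow, norm_mul, norm_inv, Complex.norm_natCast]
  calc |(k2 : ℝ)| * ((N : ℝ)⁻¹ * ‖S‖) = 2 * |(k2 : ℝ)| / N * ‖S‖ / 2 := by ring
    _ ≤ ‖1 - fourierRoot N k2‖ * ‖S‖ / 2 := by
        gcongr; exact two_mul_abs_div_le_norm_one_sub_fourierRoot hk2
    _ ≤ l1grid N (fdV N x) := by linarith

theorem sqrt_sq_add_sq_mul_norm_dft2_le {N : ℕ} (x : ℕ → ℕ → ℂ) {k1 k2 : ℤ}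
    (hk1 : 3 * |k1| ≤ 2 * N) (hk2 : 3 * |k2| ≤ 2 * N) :
    √((k1 : ℝ) ^ 2 + (k2 : ℝ) ^ 2) * ‖dft2 N x k1 k2‖ ≤
      l1grid N (fdH N x) + l1grid N (fdV N x) := by
  have hsqrt : √((k1 : ℝ) ^ 2 + (k2 : ℝ) ^ 2) ≤ |(k1 : ℝ)| + |(k2 : ℝ)| := by
    rw [sqrt_le_left (by positivity)]
    nlinarith [sq_abs (k1 : ℝ), sq_abs (k2 : ℝ), abs_nonneg (k1 : ℝ), abs_nonneg (k2 : ℝ)]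
  calc √((k1 : ℝ) ^ 2 + (k2 : ℝ) ^ 2) * ‖dft2 N x k1 k2‖
      ≤ (|(k1 : ℝ)| + |(k2 : ℝ)|) * ‖dft2 N x k1 k2‖ := by gcongr
    _ ≤ l1grid N (fdH N x) + l1grid N (fdV N x) := by
        rw [add_mul]
        exact add_le_add (abs_mul_norm_dft2_le_l1grid_fdH x k2 hk1)
          (abs_mul_norm_dft2_le_l1grid_fdV x k1 hk2)

lemma l1grid_indic_le_card (N : ℕ) (I : Finset (ℕ × ℕ)) : l1grid N (indic I) ≤ #I := by
  have hterm : ∀ p : ℕ × ℕ, ‖indic I p.1 p.2‖ = if p ∈ I then 1 else 0 := fun p => by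
    by_cases hp : p ∈ I <;> simp [indic, hp]
  rw [l1grid, ← sum_product' (f := fun a b => ‖indic I a b‖)]
  simp only [hterm, sum_boole, Nat.cast_le]
  exact card_le_card fun p hp => (mem_filter.1 hp).2

lemma two_le_of_nonempty_of_ssubset_grid {N : ℕ} {I : Finset (ℕ × ℕ)} (hne : I.Nonempty)
    (hI : I ⊂ Icc 1 N ×ˢ Icc 1 N) : 2 ≤ N := by
  have h := card_lt_card hI
  rw [card_product, Nat.card_Icc, Nat.add_sub_cancel] at h
  nlinarith [hne.card_pos]

lemma three_mul_abs_le_of_mem_centered_range {N : ℕ} (hN : 2 ≤ N) {k : ℤ}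
    (hk : -((N : ℤ) / 2) + 1 ≤ k ∧ k ≤ ((N : ℤ) + 1) / 2) : 3 * |k| ≤ 2 * N := by
  rcases abs_cases k with ⟨h, _⟩ | ⟨h, _⟩ <;> omega

theorem stmt17 (N : ℕ) (I : Finset (ℕ × ℕ))
    (hI : I ⊆ Finset.Icc 1 N ×ˢ Finset.Icc 1 N)
    (hne : I.Nonempty) (hproper : I ≠ Finset.Icc 1 N ×ˢ Finset.Icc 1 N)
    (k1 k2 : ℤ)
    (hk1 : -((N : ℤ) / 2) + 1 ≤ k1 ∧ k1 ≤ ((N : ℤ) + 1) / 2)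
    (hk2 : -((N : ℤ) / 2) + 1 ≤ k2 ∧ k2 ≤ ((N : ℤ) + 1) / 2) :
    ‖dft2 N (fun t1 t2 => indic I t1 t2 / (Real.sqrt I.card : ℂ)) k1 k2‖ ≤
        Real.sqrt I.card / N ∧
    (¬(k1 = 0 ∧ k2 = 0) →
      ‖dft2 N (fun t1 t2 => indic I t1 t2 / (Real.sqrt I.card : ℂ)) k1 k2‖ ≤
        Per N I / (Real.sqrt ((k1 : ℝ) ^ 2 + (k2 : ℝ) ^ 2) * Real.sqrt I.card)) := by
  have hN : 2 ≤ N := two_le_of_nonempty_of_ssubset_grid hne (hI.ssubset_of_ne hproper)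
  have hc : 0 < √(#I : ℝ) := sqrt_pos.2 (by exact_mod_cast hne.card_pos)
  rw [dft2_div_const, norm_div, Complex.norm_real, norm_of_nonneg hc.le]
  refine ⟨?_, fun hk => ?_⟩
  · calc ‖dft2 N (indic I) k1 k2‖ / √(#I : ℝ) ≤ #I / N / √(#I : ℝ) := by
          gcongr; exact (norm_dft2_le N _ k1 k2).trans (by gcongr; exact l1grid_indic_le_card N I)
      _ = √(#I : ℝ) / N := by
          rw [div_right_comm, div_sqrt]
  · have hr : 0 < √((k1 : ℝ) ^ 2 + (k2 : ℝ) ^ 2) := by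
      rcases not_and_or.1 hk with h | h <;> positivity
    rw [← div_div]
    gcongr
    rw [le_div_iff₀' hr]
    exact sqrt_sq_add_sq_mul_norm_dft2_le _ (three_mul_abs_le_of_mem_centered_range hN hk1)
      (three_mul_abs_le_of_mem_centered_range hN hk2)
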